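/- arXiv:1201.5516 — 3 statements merged into one kernel-verified Lean document; each statement's English description precedes it below -/
import Mathlib

section
/- Let (Xᵢ) be i.i.d. random variables taking values in a measurable semigroup, B a measurable set with P(X₁ ∈ B) ≤ 1/2, and η Poisson with mean n independent of (Xᵢ). Then for every measurable C: P(∃ m ≤ n, ∑_{i=1}^m 1_B(Xᵢ)Xᵢ ∈ C) ≤ 2 P(∃ m ≤ η, ∑_{i=1}^m 1_B(Xᵢ)Xᵢ ∈ C). -/
open MeasureTheory ProbabilityTheory
open scoped NNReal ENNReal

/-- Factorial ratio bound: for `j < n`, `(n+j)! ≤ n^(2j+1) * (n-1-j)!`. -/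
lemma gmz_fact_le (n : ℕ) : ∀ j, j < n → (n + j).factorial ≤ n ^ (2 * j + 1) * (n - 1 - j).factorial := by
  intro j
  induction j with
  | zero =>
    intro hn
    have h1 : n - 1 + 1 = n := by omega
    have h2 : (n + 0).factorial = n * (n - 1).factorial := by
      rw [Nat.add_zero, ← h1, Nat.factorial_succ, h1]
    rw [h2]
    simp
  | succ j ih =>
    intro hj
    have hj' : j < n := by omega
    have ihj := ih hj'
    have hsub : n - 1 - j = (n - 1 - (j + 1)) + 1 := by omega
    have hfac : (n - 1 - j).factorial = ((n - 1 - j)) * (n - 1 - (j + 1)).factorial := by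
      rw [hsub, Nat.factorial_succ, ← hsub]
    have hkey : (n + (j + 1)) * (n - 1 - j) ≤ n * n := by
      have hb : n - 1 - j = n - (j + 1) := by omega
      obtain ⟨b, hbeq⟩ : ∃ b, n = b + (j + 1) := ⟨n - (j + 1), by omega⟩
      have : n - 1 - j = b := by omega
      rw [this, hbeq]
      nlinarith
    calc (n + (j + 1)).factorial = (n + (j + 1)) * (n + j).factorial := by
          rw [show n + (j + 1) = (n + j) + 1 from rfl, Nat.factorial_succ]
      _ ≤ (n + (j + 1)) * (n ^ (2 * j + 1) * (n - 1 - j).factorial) :=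
          Nat.mul_le_mul_left _ ihj
      _ = ((n + (j + 1)) * (n - 1 - j)) * (n ^ (2 * j + 1) * (n - 1 - (j + 1)).factorial) := by
          rw [hfac]; ring
      _ ≤ (n * n) * (n ^ (2 * j + 1) * (n - 1 - (j + 1)).factorial) :=
          Nat.mul_le_mul_right _ hkey
      _ = n ^ (2 * (j + 1) + 1) * (n - 1 - (j + 1)).factorial := by
          rw [show 2 * (j + 1) + 1 = (2 * j + 1) + 2 by ring, pow_add]; ring

/-- Term comparison: for `j < n`, `n^(n-1-j)/(n-1-j)! ≤ n^(n+j)/(n+j)!`. -/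
lemma gmz_term_le (n j : ℕ) (hj : j < n) :
    (n : ℝ) ^ (n - 1 - j) / (n - 1 - j).factorial ≤ (n : ℝ) ^ (n + j) / (n + j).factorial := by
  have hfac := gmz_fact_le n j hj
  have h1 : (0 : ℝ) < (n - 1 - j).factorial := by exact_mod_cast (n - 1 - j).factorial_pos
  have h2 : (0 : ℝ) < (n + j).factorial := by exact_mod_cast (n + j).factorial_pos
  rw [div_le_div_iff₀ h1 h2]
  have hpow : (n : ℝ) ^ (n - 1 - j) * (n ^ (2 * j + 1)) = (n : ℝ) ^ (n + j) := by
    rw [← pow_add]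
    congr 1
    omega
  calc (n : ℝ) ^ (n - 1 - j) * (n + j).factorial
      ≤ (n : ℝ) ^ (n - 1 - j) * ((n : ℝ) ^ (2 * j + 1) * (n - 1 - j).factorial) := by
        apply mul_le_mul_of_nonneg_left _ (by positivity)
        exact_mod_cast hfac
    _ = (n : ℝ) ^ (n + j) * (n - 1 - j).factorial := by rw [← mul_assoc, hpow]

/-- Half-mass bound: `∑_{k<n} e^{-n} n^k/k! ≤ 1/2`. -/
lemma gmz_sum_le_half (n : ℕ) :
    ∑ k ∈ Finset.range n, Real.exp (-(n : ℝ)) * (n : ℝ) ^ k / k.factorial ≤ 1 / 2 := by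
  set f : ℕ → ℝ := fun k => (n : ℝ) ^ k / k.factorial with hf
  have hstep1 : ∑ k ∈ Finset.range n, f k ≤ ∑ k ∈ Finset.Ico n (2 * n), f k := by
    have hre : ∑ k ∈ Finset.range n, f k = ∑ j ∈ Finset.range n, f (n - 1 - j) :=
      (Finset.sum_range_reflect f n).symm
    have hic : ∑ k ∈ Finset.Ico n (2 * n), f k = ∑ j ∈ Finset.range n, f (n + j) := by
      rw [Finset.sum_Ico_eq_sum_range, show 2 * n - n = n from by omega]
    rw [hre, hic]
    exact Finset.sum_le_sum fun j hj => gmz_term_le n j (Finset.mem_range.mp hj)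
  have hstep2 : ∑ k ∈ Finset.range n, f k + ∑ k ∈ Finset.Ico n (2 * n), f k
      = ∑ k ∈ Finset.range (2 * n), f k :=
    Finset.sum_range_add_sum_Ico f (by omega)
  have hexp : ∑ k ∈ Finset.range (2 * n), f k ≤ Real.exp n :=
    Real.sum_le_exp_of_nonneg (by positivity) _
  have hsum : ∑ k ∈ Finset.range n, f k ≤ Real.exp n / 2 := by linarith
  have heq : ∑ k ∈ Finset.range n, Real.exp (-(n : ℝ)) * (n : ℝ) ^ k / k.factorial
      = Real.exp (-(n : ℝ)) * ∑ k ∈ Finset.range n, f k := by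
    rw [Finset.mul_sum]
    exact Finset.sum_congr rfl fun k _ => by simp [hf, mul_div_assoc]
  rw [heq]
  have hepos : (0 : ℝ) < Real.exp (-(n : ℝ)) := Real.exp_pos _
  calc Real.exp (-(n : ℝ)) * ∑ k ∈ Finset.range n, f k
      ≤ Real.exp (-(n : ℝ)) * (Real.exp n / 2) := by
        exact mul_le_mul_of_nonneg_left hsum hepos.le
    _ = 1 / 2 := by
        rw [Real.exp_neg]
        field_simp

/-- The Poisson(n) distribution puts mass at least 1/2 on `{k | n ≤ k}`. -/
lemma gmz_poisson_tail (n : ℕ) :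
    (1 : ℝ≥0∞) / 2 ≤ (poissonPMF (n : ℝ≥0)).toMeasure {k : ℕ | n ≤ k} := by
  have hlow : (poissonPMF (n : ℝ≥0)).toMeasure (↑(Finset.range n) : Set ℕ) ≤ 1 / 2 := by
    rw [PMF.toMeasure_apply_finset]
    have : ∀ k ∈ Finset.range n, poissonPMF (n : ℝ≥0) k
        = ENNReal.ofReal (poissonPMFReal (n : ℝ≥0) k) := fun k _ => rfl
    rw [Finset.sum_congr rfl this, ← ENNReal.ofReal_sum_of_nonneg
      (fun k _ => poissonPMFReal_nonneg)]
    have := gmz_sum_le_half n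
    have hsum_eq : ∑ k ∈ Finset.range n, poissonPMFReal (n : ℝ≥0) k
        = ∑ k ∈ Finset.range n, Real.exp (-(n : ℝ)) * (n : ℝ) ^ k / k.factorial := by
      refine Finset.sum_congr rfl fun k _ => ?_
      simp [poissonPMFReal]
    rw [hsum_eq]
    calc ENNReal.ofReal (∑ k ∈ Finset.range n, Real.exp (-(n : ℝ)) * (n : ℝ) ^ k / k.factorial)
        ≤ ENNReal.ofReal (1 / 2) := ENNReal.ofReal_le_ofReal this
      _ = 1 / 2 := by
          rw [ENNReal.ofReal_div_of_pos (by norm_num)]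
          norm_num
  have hcompl : {k : ℕ | n ≤ k} = (↑(Finset.range n) : Set ℕ)ᶜ := by
    ext k
    simp [Nat.not_lt]
  rw [hcompl, prob_compl_eq_one_sub (Finset.range n).measurableSet]
  calc (1 : ℝ≥0∞) / 2 = 1 - 1 / 2 := by
        rw [ENNReal.sub_half ENNReal.one_ne_top]
    _ ≤ 1 - (poissonPMF (n : ℝ≥0)).toMeasure (↑(Finset.range n) : Set ℕ) :=
        tsub_le_tsub_left hlow 1

/-- **Giné–Mason–Zaitsev Poissonisation lemma.** Let `(D, 𝒟)` be a measurable
semigroup (with zero), `(Xᵢ)` i.i.d. `D`-valued, `η` Poisson with mean `n`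
independent of the sequence, `B` measurable with `P(X₁ ∈ B) ≤ 1/2`. Then for
every measurable `C`,
`P(∑_{i=1}^n 1_B(Xᵢ)Xᵢ ∈ C) ≤ 2 P(∑_{i=1}^η 1_B(Xᵢ)Xᵢ ∈ C)`. -/
theorem poissonisation_exists_partial_sum
    {Ω D : Type*} [MeasurableSpace Ω] [AddCommMonoid D] [MeasurableSpace D]
    [MeasurableAdd₂ D]
    (P : Measure Ω) [IsProbabilityMeasure P]
    (X : ℕ → Ω → D) (hXm : ∀ i, Measurable (X i))
    (hiid : iIndepFun X P)
    (hid : ∀ i, IdentDistrib (X i) (X 0) P P)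
    (n : ℕ) (η : Ω → ℕ) (hηm : Measurable η)
    (hη : Measure.map η P = (poissonPMF (n : ℝ≥0)).toMeasure)
    (hindep : IndepFun (fun ω => fun i => X i ω) η P)
    (B : Set D) (hB : MeasurableSet B) (hBhalf : P (X 0 ⁻¹' B) ≤ 1 / 2)
    (C : Set D) (hC : MeasurableSet C) :
    P {ω | ∃ m ≤ n, (∑ i ∈ Finset.range m, B.indicator id (X i ω)) ∈ C}
      ≤ 2 * P {ω | ∃ m ≤ η ω, (∑ i ∈ Finset.range m, B.indicator id (X i ω)) ∈ C} := by
  -- the event in function space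
  set E : Set (ℕ → D) := {f | ∃ m ≤ n, (∑ i ∈ Finset.range m, B.indicator id (f i)) ∈ C}
    with hE
  have hEmeas : MeasurableSet E := by
    have : E = ⋃ m ∈ Set.Iic n,
        (fun f : ℕ → D => ∑ i ∈ Finset.range m, B.indicator id (f i)) ⁻¹' C := by
      ext f
      simp [hE, Set.mem_Iic]
    rw [this]
    refine MeasurableSet.biUnion (Set.to_countable _) fun m _ => ?_
    refine MeasurableSet.preimage hC ?_
    exact Finset.measurable_sum _ fun i _ =>
      (measurable_id.indicator hB).comp (measurable_pi_apply i)
  -- the tail set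
  have hTmeas : MeasurableSet {k : ℕ | n ≤ k} := MeasurableSet.of_discrete
  -- independence identity
  have hmul := hindep.measure_inter_preimage_eq_mul E {k : ℕ | n ≤ k} hEmeas hTmeas
  -- identification of preimages
  have hpreE : (fun ω => fun i => X i ω) ⁻¹' E
      = {ω | ∃ m ≤ n, (∑ i ∈ Finset.range m, B.indicator id (X i ω)) ∈ C} := rfl
  -- tail probability
  have htail : (1 : ℝ≥0∞) / 2 ≤ P (η ⁻¹' {k : ℕ | n ≤ k}) := by
    rw [← Measure.map_apply hηm hTmeas, hη]
    exact gmz_poisson_tail n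
  -- inclusion
  have hsub : (fun ω => fun i => X i ω) ⁻¹' E ∩ η ⁻¹' {k : ℕ | n ≤ k}
      ⊆ {ω | ∃ m ≤ η ω, (∑ i ∈ Finset.range m, B.indicator id (X i ω)) ∈ C} := by
    rintro ω ⟨⟨m, hm, hmem⟩, hηω⟩
    exact ⟨m, le_trans hm hηω, hmem⟩
  calc P {ω | ∃ m ≤ n, (∑ i ∈ Finset.range m, B.indicator id (X i ω)) ∈ C}
      = 1 * P ((fun ω => fun i => X i ω) ⁻¹' E) := by rw [one_mul, hpreE]
    _ ≤ (2 * P (η ⁻¹' {k : ℕ | n ≤ k})) * P ((fun ω => fun i => X i ω) ⁻¹' E) := by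
        apply mul_le_mul_left
        calc (1 : ℝ≥0∞) = 2 * (1 / 2) := by
              rw [one_div, ENNReal.mul_inv_cancel (by norm_num) ENNReal.ofNat_ne_top]
          _ ≤ 2 * P (η ⁻¹' {k : ℕ | n ≤ k}) := mul_le_mul_right htail 2
    _ = 2 * P ((fun ω => fun i => X i ω) ⁻¹' E ∩ η ⁻¹' {k : ℕ | n ≤ k}) := by
        rw [hmul]; ring
    _ ≤ 2 * P {ω | ∃ m ≤ η ω, (∑ i ∈ Finset.range m, B.indicator id (X i ω)) ∈ C} :=
        mul_le_mul_right (measure_mono hsub) 2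
end

section
/- Let (Xᵢ) be i.i.d. random variables in a measurable semigroup, B measurable with P(X₁ ∈ B) ≤ 1/2, and η Poisson with mean n independent of (Xᵢ). Then for every measurable C: P(∀ m ≤ n, ∑_{i=1}^m 1_B(Xᵢ)Xᵢ ∈ C) ≤ 2 P(∀ m ≤ η, ∑_{i=1}^m 1_B(Xᵢ)Xᵢ ∈ C). -/
open MeasureTheory ProbabilityTheory
open scoped NNReal ENNReal

section GMZAux
open Real


lemma sinh_le_mul_cosh {x : ℝ} (hx0 : 0 ≤ x) : sinh x ≤ x * cosh x := by
  have hmono : Monotone (fun x : ℝ => x * cosh x - sinh x) := by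
    apply monotone_of_deriv_nonneg
    · fun_prop
    · intro y
      have h : HasDerivAt (fun x : ℝ => x * cosh x - sinh x)
          (1 * cosh y + y * sinh y - cosh y) y :=
        ((hasDerivAt_id y).mul (Real.hasDerivAt_cosh y)).sub (Real.hasDerivAt_sinh y)
      rw [h.deriv]
      have he : (1 : ℝ) * cosh y + y * sinh y - cosh y = y * sinh y := by ring
      rw [he]
      rcases le_or_gt 0 y with hy | hy
      · exact mul_nonneg hy (by simpa using Real.sinh_nonneg_iff.mpr hy)
      · have hs : sinh y ≤ 0 := by simpa using Real.sinh_nonpos_iff.mpr hy.le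
        nlinarith
  have := hmono hx0
  simpa using this

lemma base_ineq {x : ℝ} (hx0 : 0 ≤ x) : (1 - x) * exp x ≤ (1 + x) * exp (-x) := by
  have h := sinh_le_mul_cosh hx0
  rw [Real.sinh_eq, Real.cosh_eq] at h
  nlinarith [Real.exp_pos x, Real.exp_pos (-x)]

lemma pointwise_ineq {n : ℕ} (hn : 1 ≤ n) {t : ℝ} (ht : t ∈ Set.Icc 0 (n : ℝ)) :
    exp (-t) * t ^ n ≤ exp (-(2 * n - t)) * (2 * n - t) ^ n := by
  obtain ⟨ht0, htn⟩ := ht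
  have hnpos : (0 : ℝ) < n := by exact_mod_cast hn
  set u : ℝ := n - t with hu
  have hu0 : 0 ≤ u := by simp [hu]; linarith
  have hx : 0 ≤ u / n := div_nonneg hu0 hnpos.le
  have hb := base_ineq hx
  have hb' : ((n : ℝ) - u) * exp (u / n) ≤ ((n : ℝ) + u) * exp (-(u / n)) := by
    have h1 : ((n : ℝ) - u) * exp (u / n) = n * ((1 - u / n) * exp (u / n)) := by
      field_simp
    have h2 : ((n : ℝ) + u) * exp (-(u / n)) = n * ((1 + u / n) * exp (-(u / n))) := by
      field_simp
    rw [h1, h2]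
    exact mul_le_mul_of_nonneg_left hb hnpos.le
  have hpow := pow_le_pow_left₀ (mul_nonneg (by linarith) (exp_nonneg _)) hb' n
  rw [mul_pow, mul_pow, ← Real.exp_nat_mul, ← Real.exp_nat_mul] at hpow
  have hnu1 : (n : ℝ) * (u / n) = u := by field_simp
  have hnu2 : (n : ℝ) * -(u / n) = -u := by field_simp
  rw [hnu1, hnu2] at hpow
  -- hpow : (n - u)^n * exp u ≤ (n + u)^n * exp (-u)
  have e1 : exp (-t) * t ^ n = exp (-(n : ℝ)) * (((n : ℝ) - u) ^ n * exp u) := by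
    rw [show ((n : ℝ) - u) = t by simp [hu], mul_comm (exp (-(n:ℝ))), mul_assoc,
      ← Real.exp_add, mul_comm (exp _) (t ^ n)]
    congr 2
    simp [hu]; ring
  have e2 : exp (-(2 * n - t)) * (2 * n - t) ^ n
      = exp (-(n : ℝ)) * (((n : ℝ) + u) ^ n * exp (-u)) := by
    rw [show ((n : ℝ) + u) = 2 * n - t by simp [hu]; ring, mul_comm (exp (-(n:ℝ))), mul_assoc,
      ← Real.exp_add, mul_comm (exp _) ((2 * (n:ℝ) - t) ^ n)]
    congr 2
    simp [hu]; ring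
  rw [e1, e2]
  exact mul_le_mul_of_nonneg_left hpow (exp_nonneg _)

noncomputable def gmzG (n : ℕ) (x : ℝ) : ℝ :=
  Real.exp (-x) * ∑ k ∈ Finset.range (n + 1), x ^ k / (Nat.factorial k)

lemma gmzG_hasDerivAt (n : ℕ) (x : ℝ) :
    HasDerivAt (gmzG n) (-(Real.exp (-x) * x ^ n / (Nat.factorial n))) x := by
  have hS : HasDerivAt (fun x : ℝ => ∑ k ∈ Finset.range (n + 1), x ^ k / (Nat.factorial k))
      (∑ k ∈ Finset.range (n + 1), (k : ℝ) * x ^ (k - 1) / (Nat.factorial k)) x := by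
    apply HasDerivAt.fun_sum
    intro k _
    exact (hasDerivAt_pow k x).div_const _
  have hsum_eq : (∑ k ∈ Finset.range (n + 1), (k : ℝ) * x ^ (k - 1) / (Nat.factorial k))
      = ∑ k ∈ Finset.range n, x ^ k / (Nat.factorial k) := by
    rw [Finset.sum_range_succ']
    simp only [Nat.cast_zero, zero_mul, zero_div, add_zero]
    apply Finset.sum_congr rfl
    intro i _
    have h1 : (Nat.factorial (i + 1) : ℝ) = (i + 1) * Nat.factorial i := by
      rw [Nat.factorial_succ]; push_cast; ring
    have h2 : ((i : ℝ) + 1) ≠ 0 := by positivity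
    have h3 : (Nat.factorial i : ℝ) ≠ 0 := by
      exact_mod_cast Nat.factorial_ne_zero i
    rw [h1]
    push_cast
    rw [mul_div_mul_left _ _ h2]
  rw [hsum_eq] at hS
  have hE : HasDerivAt (fun x : ℝ => Real.exp (-x)) (Real.exp (-x) * (-1)) x :=
    (hasDerivAt_neg x).exp
  have := hE.fun_mul hS
  refine HasDerivAt.congr_deriv (f := gmzG n) this ?_
  have hsplit : (∑ k ∈ Finset.range (n + 1), x ^ k / (Nat.factorial k))
      = (∑ k ∈ Finset.range n, x ^ k / (Nat.factorial k)) + x ^ n / (Nat.factorial n) :=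
    Finset.sum_range_succ _ n
  rw [hsplit]
  ring

lemma gmzG_integral (n : ℕ) (a b : ℝ) :
    ∫ t in a..b, Real.exp (-t) * t ^ n / (Nat.factorial n) = gmzG n a - gmzG n b := by
  have hcont : Continuous (fun t : ℝ => -(Real.exp (-t) * t ^ n / (Nat.factorial n))) := by
    fun_prop
  have h := intervalIntegral.integral_eq_sub_of_hasDerivAt
    (f := gmzG n) (f' := fun t => -(Real.exp (-t) * t ^ n / (Nat.factorial n)))
    (fun t _ => gmzG_hasDerivAt n t) (hcont.intervalIntegrable a b)
  rw [intervalIntegral.integral_neg] at h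
  linarith [h]

lemma gmzG_nonneg (n : ℕ) {x : ℝ} (hx : 0 ≤ x) : 0 ≤ gmzG n x := by
  unfold gmzG
  have : 0 ≤ ∑ k ∈ Finset.range (n + 1), x ^ k / (Nat.factorial k) :=
    Finset.sum_nonneg fun k _ => by positivity
  positivity

lemma gmzG_zero (n : ℕ) : gmzG n 0 = 1 := by
  unfold gmzG
  rw [Finset.sum_eq_single 0]
  · simp
  · intro k _ hk
    simp [zero_pow hk]
  · simp

lemma poisson_median (n : ℕ) : (1 : ℝ) / 2 ≤ gmzG n n := by
  rcases Nat.eq_zero_or_pos n with hn | hn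
  · subst hn
    simp only [Nat.cast_zero, gmzG_zero]
    norm_num
  have hn1 : (1 : ℝ) ≤ n := by exact_mod_cast hn
  set w : ℝ → ℝ := fun t => Real.exp (-t) * t ^ n / (Nat.factorial n) with hw
  have hcw : Continuous w := by fun_prop
  have h1 : ∫ t in (0 : ℝ)..(n : ℝ), w t = 1 - gmzG n n := by
    rw [gmzG_integral, gmzG_zero]
  have h2 : ∫ t in (n : ℝ)..(2 * n : ℝ), w t = gmzG n n - gmzG n (2 * n) := gmzG_integral n _ _
  have hmono : ∫ t in (0 : ℝ)..(n : ℝ), w t ≤ ∫ t in (0 : ℝ)..(n : ℝ), w (2 * n - t) := by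
    apply intervalIntegral.integral_mono_on (by positivity)
      (hcw.intervalIntegrable _ _)
      ((hcw.comp (by fun_prop)).intervalIntegrable _ _)
    intro t ht
    have hp := pointwise_ineq hn ht
    simp only [hw]
    have hfac : (0 : ℝ) < (Nat.factorial n : ℝ) := by
      exact_mod_cast Nat.factorial_pos n
    exact div_le_div_of_nonneg_right hp hfac.le
  have hsub : ∫ t in (0 : ℝ)..(n : ℝ), w (2 * n - t) = ∫ t in (n : ℝ)..(2 * n : ℝ), w t := by
    have h := intervalIntegral.integral_comp_sub_left (a := (0:ℝ)) (b := (n:ℝ)) w (2 * n)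
    rw [h, show (2*(n:ℝ) - n) = n by ring, show (2*(n:ℝ) - 0) = 2*n by ring]
  have hg2 : 0 ≤ gmzG n (2 * n) := gmzG_nonneg n (by positivity)
  rw [h1] at hmono
  rw [hsub, h2] at hmono
  linarith

open MeasureTheory ProbabilityTheory
open scoped NNReal ENNReal

lemma poisson_cdf_half (n : ℕ) :
    (1 : ℝ≥0∞) / 2 ≤ (poissonPMF (n : ℝ≥0)).toMeasure (Set.Iic n) := by
  rw [PMF.toMeasure_apply _ measurableSet_Iic]
  have hvanish : ∀ k ∉ Finset.range (n + 1),
      (Set.Iic n).indicator (⇑(poissonPMF (n : ℝ≥0))) k = 0 := by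
    intro k hk
    rw [Set.indicator_of_notMem]
    simp only [Finset.mem_range, not_lt] at hk
    simp only [Set.mem_Iic, not_le]
    omega
  rw [tsum_eq_sum hvanish]
  have heq : ∀ k ∈ Finset.range (n + 1),
      (Set.Iic n).indicator (⇑(poissonPMF (n : ℝ≥0))) k
        = ENNReal.ofReal (poissonPMFReal n k) := by
    intro k hk
    simp only [Finset.mem_range] at hk
    rw [Set.indicator_of_mem (by simp; omega)]
    rfl
  rw [Finset.sum_congr rfl heq,
    ← ENNReal.ofReal_sum_of_nonneg (fun k _ => poissonPMFReal_nonneg)]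
  have hsum : (∑ k ∈ Finset.range (n + 1), poissonPMFReal n k) = gmzG n n := by
    unfold poissonPMFReal gmzG
    rw [Finset.mul_sum]
    apply Finset.sum_congr rfl
    intro k _
    push_cast
    ring
  rw [hsum]
  have h12 : ENNReal.ofReal ((1 : ℝ) / 2) = 1 / 2 := by
    rw [ENNReal.ofReal_div_of_pos (by norm_num), ENNReal.ofReal_one, ENNReal.ofReal_ofNat]
  exact h12 ▸ ENNReal.ofReal_le_ofReal (poisson_median n)

end GMZAux

/-- **Giné–Mason–Zaitsev Poissonisation lemma.** Let `(D, 𝒟)` be a measurable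
semigroup (with zero), `(Xᵢ)` i.i.d. `D`-valued, `η` Poisson with mean `n`
independent of the sequence, `B` measurable with `P(X₁ ∈ B) ≤ 1/2`. Then for
every measurable `C`,
`P(∑_{i=1}^n 1_B(Xᵢ)Xᵢ ∈ C) ≤ 2 P(∑_{i=1}^η 1_B(Xᵢ)Xᵢ ∈ C)`. -/
theorem poissonisation_forall_partial_sum
    {Ω D : Type*} [MeasurableSpace Ω] [AddCommMonoid D] [MeasurableSpace D]
    [MeasurableAdd₂ D]
    (P : Measure Ω) [IsProbabilityMeasure P]
    (X : ℕ → Ω → D) (hXm : ∀ i, Measurable (X i))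
    (hiid : iIndepFun X P)
    (hid : ∀ i, IdentDistrib (X i) (X 0) P P)
    (n : ℕ) (η : Ω → ℕ) (hηm : Measurable η)
    (hη : Measure.map η P = (poissonPMF (n : ℝ≥0)).toMeasure)
    (hindep : IndepFun (fun ω => fun i => X i ω) η P)
    (B : Set D) (hB : MeasurableSet B) (hBhalf : P (X 0 ⁻¹' B) ≤ 1 / 2)
    (C : Set D) (hC : MeasurableSet C) :
    P {ω | ∀ m ≤ n, (∑ i ∈ Finset.range m, B.indicator id (X i ω)) ∈ C}
      ≤ 2 * P {ω | ∀ m ≤ η ω, (∑ i ∈ Finset.range m, B.indicator id (X i ω)) ∈ C} := by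
  classical
  set V : Ω → (ℕ → D) := fun ω i => X i ω with hV
  set S : Set (ℕ → D) :=
    {f | ∀ m ≤ n, (∑ i ∈ Finset.range m, B.indicator id (f i)) ∈ C} with hS
  have hSm : MeasurableSet S := by
    have hrw : S = ⋂ m ∈ Set.Iic n,
        (fun f : ℕ → D => ∑ i ∈ Finset.range m, B.indicator id (f i)) ⁻¹' C := by
      ext f
      simp [hS]
    rw [hrw]
    refine MeasurableSet.biInter (Set.to_countable _) fun m _ => ?_
    exact (Finset.measurable_sum _
      (fun i _ => (measurable_id.indicator hB).comp (measurable_pi_apply i))) hC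
  have hA_eq : {ω | ∀ m ≤ n, (∑ i ∈ Finset.range m, B.indicator id (X i ω)) ∈ C}
      = V ⁻¹' S := rfl
  have hprod := (indepFun_iff_measure_inter_preimage_eq_mul.mp hindep)
    S (Set.Iic n) hSm measurableSet_Iic
  have hη_half : (1 : ℝ≥0∞) / 2 ≤ P (η ⁻¹' Set.Iic n) := by
    rw [show P (η ⁻¹' Set.Iic n) = Measure.map η P (Set.Iic n) from
      (Measure.map_apply hηm measurableSet_Iic).symm, hη]
    exact poisson_cdf_half n
  have h1le : (1 : ℝ≥0∞) ≤ 2 * P (η ⁻¹' Set.Iic n) := by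
    calc (1 : ℝ≥0∞) = 2 * (1 / 2) := by
          rw [mul_one_div, ENNReal.div_self two_ne_zero ENNReal.ofNat_ne_top]
      _ ≤ 2 * P (η ⁻¹' Set.Iic n) := mul_le_mul_right hη_half 2
  have hsubset : V ⁻¹' S ∩ η ⁻¹' Set.Iic n
      ⊆ {ω | ∀ m ≤ η ω, (∑ i ∈ Finset.range m, B.indicator id (X i ω)) ∈ C} := by
    rintro ω ⟨h1, h2⟩ m hm
    exact h1 m (hm.trans h2)
  rw [hA_eq]
  calc P (V ⁻¹' S) = P (V ⁻¹' S) * 1 := (mul_one _).symm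
    _ ≤ P (V ⁻¹' S) * (2 * P (η ⁻¹' Set.Iic n)) := mul_le_mul_right h1le _
    _ = 2 * (P (V ⁻¹' S) * P (η ⁻¹' Set.Iic n)) := by ring
    _ = 2 * P (V ⁻¹' S ∩ η ⁻¹' Set.Iic n) := by rw [hprod]
    _ ≤ 2 * P {ω | ∀ m ≤ η ω, (∑ i ∈ Finset.range m, B.indicator id (X i ω)) ∈ C} :=
        mul_le_mul_right (measure_mono hsubset) 2
end

section
/- Let D be a semigroup with zero, φ a truncating and zero-irrelevant application on tuples of elements of D, m ≥ 1, (d₁,...,d_m) ∈ Dᵐ, and P ⊆ {1,...,m} with |P| = k. If σ is a permutation of {1,...,m} such that (1_P(σ(1)),...,1_P(σ(m))) = (1,...,1,0,...,0) (k ones followed by m−k zeros), then φ(∑_{i=1}^{→m} 1_P(σ(i)) d_i) = φ(∑_{i=1}^{→k} d_i') where d_i' enumerates (d_j)_{j∈P} in the induced order. -/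
open MeasureTheory ProbabilityTheory
open scoped NNReal ENNReal

/-- `DTilde D = ⋃_{n ≥ 1} Dⁿ`, the disjoint union of finite nonempty tuples of
elements of `D` (a tuple of length `n + 1` lives in the fiber over `n`). -/
def DTilde (D : Type*) : Type _ := Σ n : ℕ, (Fin (n + 1) → D)

/-- `DTilde D` is endowed with the σ-algebra whose trace on each `Dⁿ` is the
product σ-algebra `𝒟^{⊗ n}`. -/
instance {D : Type*} [MeasurableSpace D] : MeasurableSpace (DTilde D) :=
  inferInstanceAs (MeasurableSpace (Σ n : ℕ, (Fin (n + 1) → D)))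

/-- The arrow-sum `∑_{i=1}^{→ m} dᵢ := (d₁, d₁ + d₂, …, d₁ + ⋯ + d_m)`, the
tuple of partial sums; the empty arrow-sum (`m = 0`) is the single tuple `(0)`. -/
noncomputable def arrowSum {D : Type*} [AddCommMonoid D] (d : ℕ → D) : ℕ → DTilde D
  | 0 => ⟨0, fun _ => 0⟩
  | m + 1 => ⟨m, fun j => ∑ i ∈ Finset.range ((j : ℕ) + 1), d i⟩

/-- `φ : DTilde D → χ` is a *truncating application* if it is unchanged when the
last entry of a tuple is duplicated or the first entry is duplicated. -/
def IsTruncating {D χ : Type*} [AddCommMonoid D] (φ : DTilde D → χ) : Prop :=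
  (∀ (p : ℕ) (d : Fin (p + 1) → D),
      φ ⟨p + 1, Fin.snoc d (d (Fin.last p))⟩ = φ ⟨p, d⟩) ∧
  (∀ (p : ℕ) (d : Fin (p + 1) → D),
      φ ⟨p + 1, Fin.cons (d 0) d⟩ = φ ⟨p, d⟩)

/-- A truncating application is *zero-irrelevant* if prepending the identity `0`
to a tuple does not change its value. -/
def IsZeroIrrelevant {D χ : Type*} [AddCommMonoid D] (φ : DTilde D → χ) : Prop :=
  ∀ (p : ℕ) (d : Fin (p + 1) → D), φ ⟨p + 1, Fin.cons 0 d⟩ = φ ⟨p, d⟩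

/-- A truncating application is unchanged by removing the last entry when it
duplicates the second-to-last one. -/
lemma truncating_dup_last {D χ : Type*} [AddCommMonoid D]
    (φ : DTilde D → χ) (hφ : IsTruncating φ) (p : ℕ) (g : Fin (p + 2) → D)
    (hg : g (Fin.last (p + 1)) = g (Fin.castSucc (Fin.last p))) :
    φ ⟨p + 1, g⟩ = φ ⟨p, Fin.init g⟩ := by
  have h1 : Fin.snoc (Fin.init g) (Fin.init g (Fin.last p)) = g := by
    have h2 : Fin.init g (Fin.last p) = g (Fin.last (p + 1)) := by
      rw [hg]; rfl
    rw [h2]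
    exact Fin.snoc_init_self g
  conv_lhs => rw [← h1]
  exact hφ.1 p (Fin.init g)

/-- Replacing a tuple by its clipped version of a longer length does not change
the value of a truncating application. -/
lemma truncating_clip {D χ : Type*} [AddCommMonoid D]
    (φ : DTilde D → χ) (hφ : IsTruncating φ) (f : ℕ → D) (r : ℕ) :
    ∀ p, r ≤ p →
      φ ⟨p, fun j : Fin (p + 1) => f (min (j : ℕ) r)⟩
        = φ ⟨r, fun j : Fin (r + 1) => f (j : ℕ)⟩ := by
  intro p
  induction p with
  | zero =>
    intro h
    interval_cases r
    simp
  | succ q ih =>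
    intro h
    rcases Nat.lt_or_ge r (q + 1) with hr | hr
    · have hrq : r ≤ q := by omega
      have hlast : (fun j : Fin (q + 2) => f (min (j : ℕ) r)) (Fin.last (q + 1))
          = (fun j : Fin (q + 2) => f (min (j : ℕ) r)) (Fin.castSucc (Fin.last q)) := by
        simp only [Fin.val_last, Fin.coe_castSucc]
        rw [Nat.min_eq_right (by omega), Nat.min_eq_right hrq]
      rw [truncating_dup_last φ hφ q _ hlast]
      have : Fin.init (fun j : Fin (q + 2) => f (min (j : ℕ) r))
          = fun j : Fin (q + 1) => f (min (j : ℕ) r) := by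
        funext j
        simp [Fin.init]
      rw [this]
      exact ih hrq
    · have hrq : r = q + 1 := by omega
      subst hrq
      have : (fun j : Fin (q + 2) => f (min (j : ℕ) (q + 1)))
          = fun j : Fin (q + 2) => f (j : ℕ) := by
        funext j
        rw [Nat.min_eq_left (by omega)]
      rw [this]

/-- **Key combinatorial reduction.** If `σ` is a permutation of `{1, …, m}`
sending exactly the first `k` positions into `P` (i.e.
`(1_P(σ(1)), …, 1_P(σ(m))) = (1, …, 1, 0, …, 0)` with `k` ones), then for any
truncating and zero-irrelevant `φ`,
`φ(∑_{i=1}^{→m} 1_P(σ(i)) dᵢ) = φ(∑_{i=1}^{→k} dᵢ')`, where `dᵢ'` enumerates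
the surviving entries in the induced order. -/
theorem truncating_arrowSum_perm_reduction
    {D χ : Type*} [AddCommMonoid D]
    (φ : DTilde D → χ) (hφ : IsTruncating φ) (hφ0 : IsZeroIrrelevant φ)
    (m k : ℕ) (hm : 1 ≤ m) (d : ℕ → D)
    (Pset : Finset (Fin m)) (hcard : Pset.card = k)
    (σ : Equiv.Perm (Fin m))
    (hσ : ∀ i : Fin m, σ i ∈ Pset ↔ (i : ℕ) < k) :
    φ (arrowSum
        (fun i => if h : i < m then (if σ ⟨i, h⟩ ∈ Pset then d i else 0) else 0) m)
      = φ (arrowSum d k) := by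
  classical
  -- k ≤ m
  set e : ℕ → D :=
    fun i => if h : i < m then (if σ ⟨i, h⟩ ∈ Pset then d i else 0) else 0 with he
  have hk : k ≤ m := by
    have himg : Finset.image σ (Finset.univ.filter (fun i : Fin m => (i : ℕ) < k))
        = Pset := by
      ext x
      simp only [Finset.mem_image, Finset.mem_filter, Finset.mem_univ, true_and]
      constructor
      · rintro ⟨i, hi, rfl⟩; exact (hσ i).2 hi
      · intro hx
        exact ⟨σ.symm x, (hσ (σ.symm x)).1 (by simpa using hx), by simp⟩
    have hc : (Finset.univ.filter (fun i : Fin m => (i : ℕ) < k)).card = k := by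
      have h2 := hcard
      rw [← himg, Finset.card_image_of_injective _ σ.injective] at h2
      exact h2
    calc k = _ := hc.symm
      _ ≤ (Finset.univ : Finset (Fin m)).card := Finset.card_le_card (Finset.filter_subset _ _)
      _ = m := by simp
  -- values of e
  have he_lt : ∀ i, i < k → e i = d i := by
    intro i hik
    have him : i < m := lt_of_lt_of_le hik hk
    have hmem : σ ⟨i, him⟩ ∈ Pset := (hσ _).2 (by simpa using hik)
    simp only [he, dif_pos him, if_pos hmem]
  have he_ge : ∀ i, k ≤ i → e i = 0 := by
    intro i hik
    by_cases him : i < m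
    · have hmem : σ ⟨i, him⟩ ∉ Pset := by
        intro h
        have := (hσ _).1 h
        simp only [Fin.val_mk] at this
        omega
      simp only [he, dif_pos him, if_neg hmem]
    · simp [he, him]
  obtain ⟨q, rfl⟩ : ∃ q, m = q + 1 := ⟨m - 1, by omega⟩
  rcases Nat.eq_zero_or_pos k with hk0 | hkpos
  · -- k = 0 : all partial sums vanish
    subst hk0
    have : (fun j : Fin (q + 1) => ∑ i ∈ Finset.range ((j : ℕ) + 1), e i)
        = fun j : Fin (q + 1) => (fun _ : ℕ => (0 : D)) (min (j : ℕ) 0) := by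
      funext j
      simp only [Nat.min_self]
      exact Finset.sum_eq_zero fun i _ => he_ge i (Nat.zero_le _)
    show φ ⟨q, fun j : Fin (q + 1) => ∑ i ∈ Finset.range ((j : ℕ) + 1), e i⟩ = _
    rw [this]
    exact truncating_clip φ hφ (fun _ => 0) 0 q (Nat.zero_le _)
  · obtain ⟨r, rfl⟩ : ∃ r, k = r + 1 := ⟨k - 1, by omega⟩
    have hrq : r ≤ q := by omega
    have : (fun j : Fin (q + 1) => ∑ i ∈ Finset.range ((j : ℕ) + 1), e i)
        = fun j : Fin (q + 1) =>
            (fun n : ℕ => ∑ i ∈ Finset.range (n + 1), d i) (min (j : ℕ) r) := by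
      funext j
      by_cases hj : (j : ℕ) ≤ r
      · rw [Nat.min_eq_left hj]
        exact Finset.sum_congr rfl fun i hi => he_lt i (by
          simp only [Finset.mem_range] at hi; omega)
      · rw [Nat.min_eq_right (le_of_not_ge hj)]
        have hsub : Finset.range (r + 1) ⊆ Finset.range ((j : ℕ) + 1) :=
          Finset.range_subset_range.2 (by omega)
        rw [← Finset.sum_subset hsub (fun i _ hi => he_ge i (by
          simp only [Finset.mem_range] at hi; omega))]
        exact Finset.sum_congr rfl fun i hi => he_lt i (by
          simp only [Finset.mem_range] at hi; omega)
    show φ ⟨q, fun j : Fin (q + 1) => ∑ i ∈ Finset.range ((j : ℕ) + 1), e i⟩ = _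
    rw [this]
    exact truncating_clip φ hφ (fun n => ∑ i ∈ Finset.range (n + 1), d i) r q hrq
end
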